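/- Let A₀ be a Noetherian domain over a field k of characteristic 0, and A its integral closure in Frac(A₀). Then every k-linear derivation ξ of A₀ extends to a k-linear derivation of A; equivalently, the unique extension of ξ to Frac(A₀) preserves the subring A. -/

import Mathlib

/-!
Since `ℚ ⊆ A₀`, a derivation `D` exponentiates to a ring homomorphism `exp (t D) : A → A⟦t⟧`,
`a ↦ ∑ tᵐ Dᵐ a / m!`, compatible with the extension of `ξ` to `K = Frac A₀`. For `x = a / c`
integral over `A₀`, the series `h = exp (t Ξ) x - x` is integral over `A₀⟦t⟧` and
`exp (t ξ) c * c * h ∈ A₀⟦t⟧`, so one power `(exp (t ξ) c * c) ^ N` clears the denominators of all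
powers `h ^ n`. As `h = Ξ x * t + O(t²)`, the `tⁿ`-coefficient gives `c ^ (2 N) * (Ξ x) ^ n ∈ A₀`
for every `n`: `Ξ x` is almost integral, hence integral because `A₀` is Noetherian.
-/

open Finset PowerSeries
open scoped nonZeroDivisors Nat

theorem IsIntegral.exists_pow_smul_pow_mem_range {R S : Type*} [CommRing R] [CommRing S]
    [Algebra R S] {s : S} (hs : IsIntegral R s) {t : R}
    (ht : t • s ∈ (algebraMap R S).range) :
    ∃ N, ∀ n, t ^ N • s ^ n ∈ (algebraMap R S).range := by
  obtain ⟨p, hp, hps⟩ := hs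
  by_cases hp1 : p = 1
  · have : Subsingleton S := subsingleton_of_zero_eq_one (by simpa [hp1] using hps.symm)
    exact ⟨0, fun n => ⟨0, Subsingleton.elim _ _⟩⟩
  have hlow : ∀ i < p.natDegree, t ^ p.natDegree • s ^ i ∈ (algebraMap R S).range := by
    intro i hi
    rw [← Nat.sub_add_cancel hi.le, pow_add, mul_smul, ← smul_pow, Algebra.smul_def]
    exact mul_mem (RingHom.mem_range_self _ _) (pow_mem ht i)
  refine ⟨p.natDegree, fun n => ?_⟩
  rw [← Polynomial.aeval_X_pow (R := R) (x := s), ← Polynomial.aeval_modByMonic_eq_self_of_root hps,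
    Polynomial.aeval_eq_sum_range' (Polynomial.natDegree_modByMonic_lt _ hp hp1), smul_sum]
  refine sum_mem fun i hi => ?_
  rw [smul_comm, Algebra.smul_def]
  exact mul_mem (RingHom.mem_range_self _ _) (hlow i (mem_range.1 hi))

theorem PowerSeries.coeff_mul_pow_of_constantCoeff_eq_zero {R : Type*} [CommSemiring R]
    (g : R⟦X⟧) {f : R⟦X⟧} (hf : constantCoeff f = 0) (n : ℕ) :
    coeff n (g * f ^ n) = constantCoeff g * coeff 1 f ^ n := by
  obtain ⟨w, rfl⟩ := X_dvd_iff.2 hf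
  have hw : coeff 1 (X * w) = constantCoeff w := by
    rw [mul_comm, coeff_succ_mul_X, coeff_zero_eq_constantCoeff_apply]
  simpa [hw, mul_pow, ← mul_assoc, mul_comm _ (X ^ n), coeff_X_pow_mul'] using
    (coeff_mul_X_pow (g * w ^ n) n 0)

namespace Derivation

variable {R A : Type*} [CommSemiring R]

theorem iterate_leibniz [CommSemiring A] [Algebra R A] (D : Derivation R A A) (n : ℕ) (a b : A) :
    D^[n] (a * b) = ∑ ij ∈ antidiagonal n, n.choose ij.1 • (D^[ij.1] a * D^[ij.2] b) := by
  induction n with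
  | zero => simp
  | succ n ih =>
    rw [sum_antidiagonal_choose_succ_nsmul (M := A) (fun i j => D^[i] a * D^[j] b) n]
    simp only [Function.iterate_succ_apply', ih, map_sum, map_nsmul, leibniz, smul_eq_mul]
    rw [← sum_add_distrib]
    refine sum_congr rfl fun ⟨i, j⟩ hij => ?_
    rw [smul_add, ← Nat.choose_symm_of_eq_add (mem_antidiagonal.1 hij).symm, mul_comm (D^[j] b)]

section Exp

variable [CommRing A] [Algebra R A] [Algebra ℚ A] (D : Derivation R A A)

noncomputable def exp : A →+* A⟦X⟧ where
  toFun a := PowerSeries.mk fun m => (m ! : ℚ)⁻¹ • D^[m] a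
  map_one' := by
    ext (_ | m)
    · simp
    · simp [Function.iterate_succ_apply, Function.iterate_fixed (map_zero D)]
  map_mul' a b := by
    ext m
    simp only [coeff_mk, coeff_mul, iterate_leibniz, smul_sum]
    refine sum_congr rfl fun ⟨i, j⟩ hij => ?_
    obtain rfl := mem_antidiagonal.1 hij
    rw [smul_mul_smul_comm, ← Nat.cast_smul_eq_nsmul ℚ, smul_smul, Nat.cast_add_choose]
    field_simp
  map_zero' := by
    ext m
    simp [Function.iterate_fixed (map_zero D)]
  map_add' a b := by
    ext m
    simp [iterate_map_add]

theorem coeff_exp (m : ℕ) (a : A) : coeff m (D.exp a) = (m ! : ℚ)⁻¹ • D^[m] a := by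
  simp [exp]

@[simp]
theorem constantCoeff_exp (a : A) : constantCoeff (D.exp a) = a := by
  simp [← coeff_zero_eq_constantCoeff_apply, coeff_exp]

@[simp]
theorem coeff_one_exp (a : A) : coeff 1 (D.exp a) = D a := by
  simp [coeff_exp]

variable {B : Type*} [CommRing B] [Algebra R B] [Algebra ℚ B] [Algebra A B]
  (D' : Derivation R B B) (hD : ∀ a, D' (algebraMap A B a) = algebraMap A B (D a))
include hD

theorem algebraMap_comp_exp : (algebraMap A⟦X⟧ B⟦X⟧).comp D.exp = D'.exp.comp (algebraMap A B) := by
  ext a m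
  have hiter : ∀ a, D'^[m] (algebraMap A B a) = algebraMap A B (D^[m] a) :=
    (Function.Semiconj.iterate_right (fun a => (hD a).symm) m · |>.symm)
  simp [algebraMap_apply'', coeff_exp, hiter, map_rat_smul]

theorem isIntegral_exp {x : B} (hx : IsIntegral A x) : IsIntegral A⟦X⟧ (D'.exp x) :=
  hx.map_of_comp_eq D.exp D'.exp (D.algebraMap_comp_exp D' hD)

theorem isAlmostIntegral_apply_of_isIntegral {x : B} (hx : IsIntegral A x) {c : A} (hc : c ∈ A⁰)
    (hcx : c • x ∈ (algebraMap A B).range) : IsAlmostIntegral A (D' x) := by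
  have hexp a : D'.exp (algebraMap A B a) = algebraMap A⟦X⟧ B⟦X⟧ (D.exp a) :=
    (RingHom.congr_fun (D.algebraMap_comp_exp D' hD) a).symm
  set h := D'.exp x - C x
  have h_int : IsIntegral A⟦X⟧ h :=
    (isIntegral_exp D D' hD hx).sub (hx.map_of_comp_eq C C (RingHom.ext fun _ => map_C _ _))
  have h_den : (D.exp c * C c) • h ∈ (algebraMap A⟦X⟧ B⟦X⟧).range := by
    obtain ⟨a, ha⟩ := hcx
    rw [Algebra.smul_def] at ha
    refine ⟨C c * D.exp a - D.exp c * C a, ?_⟩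
    simp only [Algebra.smul_def, h, map_sub, map_mul, ← hexp, algebraMap_apply'', map_C, ha]
    ring
  obtain ⟨N, hN⟩ := h_int.exists_pow_smul_pow_mem_range h_den
  refine ⟨(c * c) ^ N, pow_mem (mul_mem hc hc) N, fun n => ?_⟩
  obtain ⟨q, hq⟩ := hN n
  refine ⟨coeff n q, ?_⟩
  have hn := congrArg (coeff n) hq
  rw [algebraMap_apply'', coeff_map, Algebra.smul_def,
    coeff_mul_pow_of_constantCoeff_eq_zero _ (by simp [h])] at hn
  have h0 : constantCoeff (algebraMap A⟦X⟧ B⟦X⟧ ((D.exp c * C c) ^ N)) =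
      algebraMap A B ((c * c) ^ N) := by
    rw [algebraMap_apply'', ← coeff_zero_eq_constantCoeff_apply, coeff_map,
      coeff_zero_eq_constantCoeff_apply]
    simp
  rw [hn, h0, Algebra.smul_def]
  simp [h]

end Exp

end Derivation

theorem derivation_preserves_integralClosure_general {k A₀ : Type*} [Field k] [CharZero k]
    [CommRing A₀] [IsNoetherianRing A₀] [Algebra k A₀]
    [Algebra k (FractionRing A₀)]
    (ξ : Derivation k A₀ A₀)
    (Ξ : Derivation k (FractionRing A₀) (FractionRing A₀))
    (hΞ : ∀ a : A₀, Ξ (algebraMap A₀ (FractionRing A₀) a)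
        = algebraMap A₀ (FractionRing A₀) (ξ a)) :
    ∀ x ∈ integralClosure A₀ (FractionRing A₀),
      Ξ x ∈ integralClosure A₀ (FractionRing A₀) := by
  intro x hx
  let _ : Algebra ℚ A₀ := ((algebraMap k A₀).comp (algebraMap ℚ k)).toAlgebra
  obtain ⟨⟨a, c⟩, hca⟩ := IsLocalization.surj A₀⁰ x
  have hcx : (c : A₀) • x ∈ (algebraMap A₀ (FractionRing A₀)).range :=
    ⟨a, by rw [Algebra.smul_def, mul_comm, hca]⟩
  -- `Ξ` is linear for the `k`-module structure inherited from `A₀`, not for the `Algebra k`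
  -- instance in its type; only its additivity matters, so we view it as a `ℤ`-derivation, for
  -- `Ring.toIntAlgebra` (the `ℤ`-algebra structure inherited from `A₀` is not defeq to it).
  let _ : Algebra ℤ (FractionRing A₀) := Ring.toIntAlgebra _
  let Ξℤ : Derivation ℤ (FractionRing A₀) (FractionRing A₀) :=
    ⟨(Ξ : FractionRing A₀ →+ FractionRing A₀).toIntLinearMap, Ξ.map_one_eq_zero, Ξ.leibniz⟩
  exact ((ξ.restrictScalars ℤ).isAlmostIntegral_apply_of_isIntegral Ξℤ hΞ hx c.2
    hcx).isIntegral_of_nonZeroDivisors_le_comap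
    fun c hc => (IsLocalization.map_units (FractionRing A₀) ⟨c, hc⟩).mem_nonZeroDivisors

/-- For a Noetherian domain `A₀` over a field `k` of characteristic `0`, the unique
extension to `Frac A₀` of any `k`-linear derivation of `A₀` preserves the integral
closure of `A₀` in `Frac A₀`. -/
theorem derivation_preserves_integralClosure {k A₀ : Type*} [Field k] [CharZero k]
    [CommRing A₀] [IsDomain A₀] [IsNoetherianRing A₀] [Algebra k A₀]
    [Algebra k (FractionRing A₀)] [IsScalarTower k A₀ (FractionRing A₀)]
    (ξ : Derivation k A₀ A₀)
    (Ξ : Derivation k (FractionRing A₀) (FractionRing A₀))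
    (hΞ : ∀ a : A₀, Ξ (algebraMap A₀ (FractionRing A₀) a)
        = algebraMap A₀ (FractionRing A₀) (ξ a)) :
    ∀ x ∈ integralClosure A₀ (FractionRing A₀),
      Ξ x ∈ integralClosure A₀ (FractionRing A₀) :=
  derivation_preserves_integralClosure_general ξ Ξ hΞ
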